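/- arXiv:2112.05531 — 2 statements merged into one kernel-verified Lean document; each statement's English description precedes it below -/
import Mathlib

section
/- Let L : ℝ^m → ℝ≥0 satisfy a local PL property with bounding functions m, M (m non-increasing, M non-decreasing), and let v^0 be such that there exists R ≥ 0 with 2√2 · √(M(‖v^0‖+R)) / m(‖v^0‖+R) · √(L(v^0)) ≤ R. Suppose L is β-smooth on the ball B(v^0, R). Then for step size η ≤ 1/β, the gradient descent iterates satisfy L(v^k) ≤ (1 − m(‖v^0‖+R)η)^k L(v^0) and ‖v^k − v^0‖ ≤ R for all k ≥ 0. -/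
open RealInnerProductSpace

set_option maxHeartbeats 2000000 in
/-- Local convergence of gradient descent under a local PL property, a smallness
condition on the initial loss, and β-smoothness on the ball `B(v⁰, R)`. -/
theorem stmt2 {d : ℕ} (L : EuclideanSpace ℝ (Fin d) → ℝ) (hdiff : Differentiable ℝ L)
    (hnn : ∀ v, 0 ≤ L v)
    (m M : ℝ → ℝ) (hmpos : ∀ r, 0 ≤ r → 0 < m r) (hMpos : ∀ r, 0 ≤ r → 0 < M r)
    (hmono : Antitone m) (hMono : Monotone M)
    (hPL : ∀ v : EuclideanSpace ℝ (Fin d), 2 * m ‖v‖ * L v ≤ ‖gradient L v‖ ^ 2 ∧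
      ‖gradient L v‖ ^ 2 ≤ 2 * M ‖v‖ * L v)
    (v : ℕ → EuclideanSpace ℝ (Fin d)) (R β η : ℝ) (hR : 0 ≤ R) (hβ : 0 < β)
    (hinit : 2 * Real.sqrt 2 * Real.sqrt (M (‖v 0‖ + R)) / m (‖v 0‖ + R) *
      Real.sqrt (L (v 0)) ≤ R)
    (hsmooth : ∀ w w' : EuclideanSpace ℝ (Fin d),
      w ∈ Metric.closedBall (v 0) R → w' ∈ Metric.closedBall (v 0) R →
      |L w' - L w - ⟪gradient L w, w' - w⟫| ≤ β / 2 * ‖w' - w‖ ^ 2)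
    (hη : 0 < η) (hηβ : η ≤ 1 / β)
    (hGD : ∀ k, v (k + 1) = v k - η • gradient L (v k)) :
    ∀ k, L (v k) ≤ (1 - m (‖v 0‖ + R) * η) ^ k * L (v 0) ∧ ‖v k - v 0‖ ≤ R := by
  set r0 : ℝ := ‖v 0‖ + R with hr0def
  have hr0nn : 0 ≤ r0 := by positivity
  set μ : ℝ := m r0 with hμdef
  set Mr : ℝ := M r0 with hMrdef
  have hμ : 0 < μ := hmpos r0 hr0nn
  have hMr : 0 < Mr := hMpos r0 hr0nn
  have hL0 : 0 ≤ L (v 0) := hnn _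
  -- norm bound inside the ball
  have hnorm_le : ∀ w : EuclideanSpace ℝ (Fin d), ‖w - v 0‖ ≤ R → ‖w‖ ≤ r0 := by
    intro w hw
    have := norm_sub_norm_le w (v 0)
    rw [hr0def]; linarith
  -- PL bounds with the uniform constants on the ball
  have hPLlow : ∀ w : EuclideanSpace ℝ (Fin d), ‖w - v 0‖ ≤ R →
      2 * μ * L w ≤ ‖gradient L w‖ ^ 2 := by
    intro w hw
    have h1 := (hPL w).1
    have h2 : μ ≤ m ‖w‖ := hmono (hnorm_le w hw)
    have h3 := mul_le_mul_of_nonneg_right h2 (hnn w)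
    nlinarith [h3, h1]
  have hPLhigh : ∀ w : EuclideanSpace ℝ (Fin d), ‖w - v 0‖ ≤ R →
      ‖gradient L w‖ ^ 2 ≤ 2 * Mr * L w := by
    intro w hw
    have h1 := (hPL w).2
    have h2 : M ‖w‖ ≤ Mr := hMono (hnorm_le w hw)
    have h3 := mul_le_mul_of_nonneg_right h2 (hnn w)
    nlinarith [h3, h1]
  -- ball membership
  have hmem : ∀ w : EuclideanSpace ℝ (Fin d), ‖w - v 0‖ ≤ R →
      w ∈ Metric.closedBall (v 0) R := by
    intro w hw
    rw [Metric.mem_closedBall, dist_eq_norm]; exact hw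
  have hmem0 : v 0 ∈ Metric.closedBall (v 0) R := Metric.mem_closedBall_self hR
  by_cases hL0z : L (v 0) = 0
  · -- degenerate case: the iterates never move
    have hg0 : gradient L (v 0) = 0 := by
      have h := (hPL (v 0)).2
      rw [hL0z] at h
      have h2 : ‖gradient L (v 0)‖ = 0 := by
        nlinarith [norm_nonneg (gradient L (v 0))]
      exact norm_eq_zero.mp h2
    have hfix : ∀ k, v k = v 0 := by
      intro k
      induction k with
      | zero => rfl
      | succ n ih => rw [hGD n, ih, hg0, smul_zero, sub_zero]
    intro k
    rw [hfix k, hL0z]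
    constructor
    · simp
    · simpa using hR
  · have hL0p : 0 < L (v 0) := lt_of_le_of_ne hL0 (Ne.symm hL0z)
    have hsL0 : 0 < Real.sqrt (L (v 0)) := Real.sqrt_pos.mpr hL0p
    have hsMr : 0 < Real.sqrt Mr := Real.sqrt_pos.mpr hMr
    have hRpos : 0 < R := by
      have : 0 < 2 * Real.sqrt 2 * Real.sqrt Mr / μ * Real.sqrt (L (v 0)) := by positivity
      linarith
    -- rearranged initial condition
    have hinit2 : 2 * Real.sqrt 2 * Real.sqrt Mr * Real.sqrt (L (v 0)) ≤ μ * R := by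
      rw [div_mul_eq_mul_div, div_le_iff₀ hμ] at hinit
      linarith
    -- bound on the initial gradient
    have hg0sq : ‖gradient L (v 0)‖ ^ 2 ≤ 2 * Mr * L (v 0) :=
      hPLhigh (v 0) (by simpa using hR)
    have hg0le : ‖gradient L (v 0)‖ ≤ μ * R / 2 := by
      have h2 : ‖gradient L (v 0)‖ ≤ Real.sqrt (2 * Mr * L (v 0)) := by
        have := Real.sqrt_le_sqrt hg0sq
        rwa [Real.sqrt_sq (norm_nonneg _)] at this
      have h3 : Real.sqrt (2 * Mr * L (v 0)) =
          Real.sqrt 2 * Real.sqrt Mr * Real.sqrt (L (v 0)) := by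
        rw [Real.sqrt_mul (by positivity), Real.sqrt_mul (by norm_num)]
      rw [h3] at h2
      linarith
    -- smoothness lower bound on L at points of the ball, from v 0
    have hsm0 : ∀ w : EuclideanSpace ℝ (Fin d), ‖w - v 0‖ ≤ R →
        L w ≤ L (v 0) + ⟪gradient L (v 0), w - v 0⟫ + β / 2 * ‖w - v 0‖ ^ 2 := by
      intro w hw
      have h := hsmooth (v 0) w hmem0 (hmem w hw)
      have h2 := abs_le.mp h
      linarith [h2.2]
    -- μ ≤ β
    have hμβ : μ ≤ β := by
      set g : EuclideanSpace ℝ (Fin d) := gradient L (v 0) with hgdef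
      have hglow : 2 * μ * L (v 0) ≤ ‖g‖ ^ 2 := hPLlow (v 0) (by simpa using hR)
      by_cases hcase : ‖g‖ ≤ β * R
      · -- use the point v 0 - (1/β) • g
        set w : EuclideanSpace ℝ (Fin d) := v 0 - (1/β) • g with hwdef
        have hwd : w - v 0 = -((1/β) • g) := by rw [hwdef]; abel
        have hwn : ‖w - v 0‖ = (1/β) * ‖g‖ := by
          rw [hwd, norm_neg, norm_smul, Real.norm_eq_abs, abs_of_pos (by positivity)]
        have hwR : ‖w - v 0‖ ≤ R := by
          rw [hwn]
          calc 1 / β * ‖g‖ ≤ 1 / β * (β * R) :=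
              mul_le_mul_of_nonneg_left hcase (by positivity)
            _ = R := by field_simp
        have hinner : ⟪g, w - v 0⟫ = -((1/β) * ‖g‖ ^ 2) := by
          rw [hwd, inner_neg_right, real_inner_smul_right, real_inner_self_eq_norm_sq]
        have h := hsm0 w hwR
        rw [hinner, hwn] at h
        have hLw := hnn w
        have hβne : β ≠ 0 := ne_of_gt hβ
        have hkey : ‖g‖ ^ 2 ≤ 2 * β * L (v 0) := by
          have hexp : L (v 0) + -(1/β * ‖g‖ ^ 2) + β / 2 * (1/β * ‖g‖) ^ 2
              = L (v 0) - ‖g‖ ^ 2 / (2 * β) := by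
            field_simp; ring
          rw [hexp] at h
          have h5 : ‖g‖ ^ 2 / (2 * β) ≤ L (v 0) := by linarith
          rw [div_le_iff₀ (by positivity : (0:ℝ) < 2 * β)] at h5
          linarith
        exact le_of_mul_le_mul_right (by linarith : μ * (2 * L (v 0)) ≤ β * (2 * L (v 0)))
          (by positivity)
      · -- impossible case
        exfalso
        push_neg at hcase
        have hgpos : 0 < ‖g‖ := lt_of_le_of_lt (by positivity) hcase
        set t : ℝ := R / ‖g‖ with htdef
        have htpos : 0 < t := by positivity
        set w : EuclideanSpace ℝ (Fin d) := v 0 - t • g with hwdef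
        have hwd : w - v 0 = -(t • g) := by rw [hwdef]; abel
        have hwn : ‖w - v 0‖ = R := by
          rw [hwd, norm_neg, norm_smul, Real.norm_eq_abs, abs_of_pos htpos, htdef]
          field_simp
        have hinner : ⟪g, w - v 0⟫ = -(t * ‖g‖ ^ 2) := by
          rw [hwd, inner_neg_right, real_inner_smul_right, real_inner_self_eq_norm_sq]
        have h := hsm0 w (le_of_eq hwn)
        rw [hinner, hwn] at h
        have hLw := hnn w
        have ht1 : t * ‖g‖ = R := by rw [htdef]; field_simp
        have ht2 : t * ‖g‖ ^ 2 = R * ‖g‖ := by rw [pow_two, ← mul_assoc, ht1]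
        rw [ht2] at h
        -- 0 ≤ L w ≤ L (v 0) - R‖g‖ + βR²/2, with 2μL0 ≤ ‖g‖², ‖g‖ ≤ μR/2, βR < ‖g‖
        have hA : 0 ≤ L (v 0) - R * ‖g‖ + β / 2 * R ^ 2 := by linarith
        have hB : β * R ^ 2 < R * ‖g‖ := by nlinarith [mul_lt_mul_of_pos_left hcase hRpos]
        have hC2 : R * ‖g‖ ≤ 2 * L (v 0) := by linarith
        have hD2 : μ * R * ‖g‖ ≤ ‖g‖ * ‖g‖ := by
          have h7 := mul_le_mul_of_nonneg_left hC2 hμ.le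
          nlinarith [h7, hglow]
        have hE : μ * R ≤ ‖g‖ := le_of_mul_le_mul_right hD2 hgpos
        have hF : 0 < μ * R := mul_pos hμ hRpos
        linarith
    have hμη : μ * η ≤ 1 := by
      have hβη : η * β ≤ 1 := (le_div_iff₀ hβ).mp hηβ
      have := mul_le_mul_of_nonneg_right hμβ hη.le
      linarith
    have h1mη : 0 ≤ 1 - μ * η := by linarith
    set ρ : ℝ := Real.sqrt (1 - μ * η) with hρdef
    have hρnn : 0 ≤ ρ := Real.sqrt_nonneg _
    have hρsq : ρ ^ 2 = 1 - μ * η := Real.sq_sqrt h1mη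
    have hρle : ρ ≤ 1 - μ * η / 2 := by
      have h1 : Real.sqrt (1 - μ * η) ≤ Real.sqrt ((1 - μ * η / 2) ^ 2) :=
        Real.sqrt_le_sqrt (by nlinarith [sq_nonneg (μ * η)])
      rwa [Real.sqrt_sq (by linarith)] at h1
    set C : ℝ := η * Real.sqrt 2 * Real.sqrt Mr * Real.sqrt (L (v 0)) with hCdef
    have hCpos : 0 < C := by positivity
    -- geometric sum bound
    have hsum : ∀ k : ℕ, C * (∑ j ∈ Finset.range k, ρ ^ j) ≤ R := by
      intro k
      have hsnn : 0 ≤ ∑ j ∈ Finset.range k, ρ ^ j :=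
        Finset.sum_nonneg fun j _ => pow_nonneg hρnn j
      have hgeo : (∑ j ∈ Finset.range k, ρ ^ j) * (1 - ρ) = 1 - ρ ^ k := by
        have := geom_sum_mul ρ k
        linarith [this]
      have h1 : (∑ j ∈ Finset.range k, ρ ^ j) * (1 - ρ) ≤ 1 := by
        rw [hgeo]; linarith [pow_nonneg hρnn k]
      have h2 : μ * η / 2 ≤ 1 - ρ := by linarith
      have h3 : μ * η * (∑ j ∈ Finset.range k, ρ ^ j) ≤ 2 := by
        linarith [mul_le_mul_of_nonneg_left h2 hsnn]
      have h4 : μ * η * (C * (∑ j ∈ Finset.range k, ρ ^ j)) ≤ μ * η * R := by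
        calc μ * η * (C * (∑ j ∈ Finset.range k, ρ ^ j))
            = C * (μ * η * (∑ j ∈ Finset.range k, ρ ^ j)) := by ring
          _ ≤ C * 2 := mul_le_mul_of_nonneg_left h3 hCpos.le
          _ = η * (2 * Real.sqrt 2 * Real.sqrt Mr * Real.sqrt (L (v 0))) := by
              rw [hCdef]; ring
          _ ≤ η * (μ * R) := mul_le_mul_of_nonneg_left hinit2 hη.le
          _ = μ * η * R := by ring
      exact le_of_mul_le_mul_left h4 (by positivity)
    -- main induction
    have main : ∀ k, L (v k) ≤ (1 - μ * η) ^ k * L (v 0) ∧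
        ‖v k - v 0‖ ≤ C * (∑ j ∈ Finset.range k, ρ ^ j) := by
      intro k
      induction k with
      | zero => simp
      | succ n ih =>
        obtain ⟨ihL, ihD⟩ := ih
        have hDn : ‖v n - v 0‖ ≤ R := ihD.trans (hsum n)
        set g : EuclideanSpace ℝ (Fin d) := gradient L (v n) with hgdef
        have hLnn : 0 ≤ L (v n) := hnn _
        have hgup : ‖g‖ ^ 2 ≤ 2 * Mr * L (v n) := hPLhigh (v n) hDn
        have hglow : 2 * μ * L (v n) ≤ ‖g‖ ^ 2 := hPLlow (v n) hDn
        -- bound √(L (v n))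
        have hsqrtpow : Real.sqrt ((1 - μ * η) ^ n) = ρ ^ n := by
          rw [show (1 - μ * η) ^ n = (ρ ^ n) ^ 2 by
            rw [← pow_mul, mul_comm n 2, pow_mul, hρsq]]
          exact Real.sqrt_sq (pow_nonneg hρnn n)
        have hsL : Real.sqrt (L (v n)) ≤ ρ ^ n * Real.sqrt (L (v 0)) := by
          calc Real.sqrt (L (v n)) ≤ Real.sqrt ((1 - μ * η) ^ n * L (v 0)) :=
              Real.sqrt_le_sqrt ihL
            _ = ρ ^ n * Real.sqrt (L (v 0)) := by
              rw [Real.sqrt_mul (pow_nonneg h1mη n), hsqrtpow]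
        -- bound the gradient norm
        have hgn : ‖g‖ ≤ Real.sqrt 2 * Real.sqrt Mr * (ρ ^ n * Real.sqrt (L (v 0))) := by
          have h2 : ‖g‖ ≤ Real.sqrt (2 * Mr * L (v n)) := by
            have := Real.sqrt_le_sqrt hgup
            rwa [Real.sqrt_sq (norm_nonneg _)] at this
          have h3 : Real.sqrt (2 * Mr * L (v n)) =
              Real.sqrt 2 * Real.sqrt Mr * Real.sqrt (L (v n)) := by
            rw [Real.sqrt_mul (by positivity), Real.sqrt_mul (by norm_num)]
          rw [h3] at h2
          have h4 := mul_le_mul_of_nonneg_left hsL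
            (by positivity : (0:ℝ) ≤ Real.sqrt 2 * Real.sqrt Mr)
          calc ‖g‖ ≤ Real.sqrt 2 * Real.sqrt Mr * Real.sqrt (L (v n)) := h2
            _ ≤ Real.sqrt 2 * Real.sqrt Mr * (ρ ^ n * Real.sqrt (L (v 0))) := h4
        -- step displacement
        have hstepd : v (n + 1) - v n = -(η • g) := by rw [hGD n]; abel
        have hstepn : ‖v (n + 1) - v n‖ = η * ‖g‖ := by
          rw [hstepd, norm_neg, norm_smul, Real.norm_eq_abs, abs_of_pos hη]
        have hstep2 : ‖v (n + 1) - v n‖ ≤ C * ρ ^ n := by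
          rw [hstepn, hCdef]
          calc η * ‖g‖
              ≤ η * (Real.sqrt 2 * Real.sqrt Mr * (ρ ^ n * Real.sqrt (L (v 0)))) :=
                mul_le_mul_of_nonneg_left hgn hη.le
            _ = η * Real.sqrt 2 * Real.sqrt Mr * Real.sqrt (L (v 0)) * ρ ^ n := by ring
        -- distance bound for v (n+1)
        have hD1 : ‖v (n + 1) - v 0‖ ≤ C * (∑ j ∈ Finset.range (n + 1), ρ ^ j) := by
          calc ‖v (n + 1) - v 0‖ = ‖(v (n + 1) - v n) + (v n - v 0)‖ := by abel_nf
            _ ≤ ‖v (n + 1) - v n‖ + ‖v n - v 0‖ := norm_add_le _ _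
            _ ≤ C * ρ ^ n + C * (∑ j ∈ Finset.range n, ρ ^ j) := by linarith
            _ = C * (∑ j ∈ Finset.range (n + 1), ρ ^ j) := by
              rw [Finset.sum_range_succ]; ring
        have hD1R : ‖v (n + 1) - v 0‖ ≤ R := hD1.trans (hsum (n + 1))
        -- descent step via smoothness
        have hs := hsmooth (v n) (v (n + 1)) (hmem _ hDn) (hmem _ hD1R)
        have hinner : ⟪g, v (n + 1) - v n⟫ = -(η * ‖g‖ ^ 2) := by
          rw [hstepd, inner_neg_right, real_inner_smul_right, real_inner_self_eq_norm_sq]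
        rw [hinner, hstepn] at hs
        have hs2 := (abs_le.mp hs).2
        -- L (v (n+1)) ≤ L (v n) - η ‖g‖² + β/2 η² ‖g‖²
        have hβη : η * β ≤ 1 := (le_div_iff₀ hβ).mp hηβ
        have hdesc : L (v (n + 1)) ≤ (1 - μ * η) * L (v n) := by
          have hk1 : η * β * (η * ‖g‖ ^ 2) ≤ 1 * (η * ‖g‖ ^ 2) :=
            mul_le_mul_of_nonneg_right hβη (by positivity)
          have hk2 : η * (2 * μ * L (v n)) ≤ η * ‖g‖ ^ 2 :=
            mul_le_mul_of_nonneg_left hglow hη.le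
          nlinarith [hs2, hk1, hk2]
        constructor
        · calc L (v (n + 1)) ≤ (1 - μ * η) * L (v n) := hdesc
            _ ≤ (1 - μ * η) * ((1 - μ * η) ^ n * L (v 0)) :=
              mul_le_mul_of_nonneg_left ihL h1mη
            _ = (1 - μ * η) ^ (n + 1) * L (v 0) := by ring
        · exact hD1
    intro k
    obtain ⟨h1, h2⟩ := main k
    exact ⟨h1, h2.trans (hsum k)⟩
end

section
/- Let V be a vector-valued RKHS over ℝ^q with kernel K(z,z') = k(‖z−z'‖) Id_q, where k is twice differentiable at 0 with k'(0) = 0. Then every v ∈ V is differentiable and satisfies ‖Dv(z)‖₂ ≤ √(−k''(0)) ‖v‖_V for all z ∈ ℝ^q, where ‖·‖₂ is the operator norm. -/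
open RealInnerProductSpace Filter Topology

noncomputable def Efun (k : ℝ → ℝ) (x : ℝ) : ℝ := k 0 - k x + deriv (deriv k) 0 / 2 * x ^ 2

lemma Efun_zero (k : ℝ → ℝ) : Efun k 0 = 0 := by simp [Efun]

lemma Eest (k : ℝ → ℝ) (hk : ContDiffAt ℝ 2 k 0) (hk' : deriv k 0 = 0) :
    ∀ ε > 0, ∃ δ > 0, ∀ x y : ℝ, |x| ≤ δ → |y| ≤ δ →
      |Efun k x - Efun k y| ≤ ε * ((|x| + |y|) * |x - y|) := by
  intro ε hε
  obtain ⟨u, hu, hcd⟩ := hk.contDiffOn (le_refl _) (by simp)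
  obtain ⟨t, htu, hto, ht0⟩ := mem_nhds_iff.1 hu
  have hcd : ContDiffOn ℝ 2 k t := hcd.mono htu
  have h2 : (2 : WithTop ℕ∞) = 1 + 1 := by norm_num
  rw [h2, contDiffOn_succ_iff_deriv_of_isOpen hto] at hcd
  obtain ⟨hdk, -, hcd1⟩ := hcd
  have h1 : (1 : WithTop ℕ∞) = 0 + 1 := by norm_num
  rw [h1, contDiffOn_succ_iff_deriv_of_isOpen hto] at hcd1
  obtain ⟨hdk2, -, hcd0⟩ := hcd1
  have hcont : ContinuousAt (deriv (deriv k)) 0 :=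
    (hcd0.continuousOn.continuousAt (hto.mem_nhds ht0))
  have hev : ∀ᶠ z in 𝓝 (0:ℝ), DifferentiableAt ℝ k z ∧ DifferentiableAt ℝ (deriv k) z ∧
      |deriv (deriv k) z - deriv (deriv k) 0| ≤ ε := by
    have e1 : ∀ᶠ z in 𝓝 (0:ℝ), z ∈ t := hto.mem_nhds ht0
    have e2 : ∀ᶠ z in 𝓝 (0:ℝ), |deriv (deriv k) z - deriv (deriv k) 0| ≤ ε := by
      have := hcont.tendsto (Metric.closedBall_mem_nhds (deriv (deriv k) 0) hε)
      filter_upwards [this] with z hz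
      simpa [Real.dist_eq] using hz
    filter_upwards [e1, e2] with z hz1 hz2
    exact ⟨hdk.differentiableAt (hto.mem_nhds hz1), hdk2.differentiableAt (hto.mem_nhds hz1), hz2⟩
  obtain ⟨δ', hδ', hP⟩ := Metric.eventually_nhds_iff.1 hev
  set k2 := deriv (deriv k) 0 with hk2
  refine ⟨δ'/2, by linarith, ?_⟩
  set δ := δ'/2 with hδdef
  have hPP : ∀ z : ℝ, |z| ≤ δ → DifferentiableAt ℝ k z ∧ DifferentiableAt ℝ (deriv k) z ∧
      |deriv (deriv k) z - k2| ≤ ε := by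
    intro z hz
    exact hP (by rw [Real.dist_eq, sub_zero]; linarith)
  -- derivative of e u := k2 * u - deriv k u is k2 - deriv (deriv k) u
  have heb : ∀ z : ℝ, |z| ≤ δ → |k2 * z - deriv k z| ≤ ε * |z| := by
    intro z hz
    have hconv : Convex ℝ (Set.Icc (-δ) δ) := convex_Icc _ _
    have hder : ∀ u ∈ Set.Icc (-δ) δ, HasDerivWithinAt (fun u => k2 * u - deriv k u)
        (k2 - deriv (deriv k) u) (Set.Icc (-δ) δ) u := by
      intro u hu
      have h := (hPP u (abs_le.2 ⟨hu.1, hu.2⟩)).2.1.hasDerivAt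
      have h2 := (((hasDerivAt_id u).const_mul k2).sub h).hasDerivWithinAt (s := Set.Icc (-δ) δ)
      rw [mul_one] at h2
      exact h2
    have hbd : ∀ u ∈ Set.Icc (-δ) δ, ‖k2 - deriv (deriv k) u‖ ≤ ε := by
      intro u hu
      have := (hPP u (abs_le.2 ⟨hu.1, hu.2⟩)).2.2
      rw [Real.norm_eq_abs, abs_sub_comm]
      exact this
    have h0 : (0:ℝ) ∈ Set.Icc (-δ) δ := by constructor <;> simp [hδdef] <;> linarith
    have hzmem : z ∈ Set.Icc (-δ) δ := Set.mem_Icc.2 (abs_le.1 hz)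
    have := hconv.norm_image_sub_le_of_norm_hasDerivWithin_le hder hbd h0 hzmem
    simpa [hk', Real.norm_eq_abs] using this
  intro x y hx hy
  set m := max |x| |y| with hm
  have hmδ : m ≤ δ := max_le hx hy
  have hmnn : 0 ≤ m := le_trans (abs_nonneg x) (le_max_left _ _)
  have hconv : Convex ℝ (Set.Icc (-m) m) := convex_Icc _ _
  have hder : ∀ u ∈ Set.Icc (-m) m, HasDerivWithinAt (Efun k)
      (k2 * u - deriv k u) (Set.Icc (-m) m) u := by
    intro u hu
    have huδ : |u| ≤ δ := le_trans (abs_le.2 ⟨hu.1, hu.2⟩) hmδ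
    have h := (hPP u huδ).1.hasDerivAt
    have : HasDerivAt (Efun k) (0 - deriv k u + k2 / 2 * (2 * u)) u := by
      unfold Efun
      exact ((hasDerivAt_const u (k 0)).sub h).add
        (((hasDerivAt_pow 2 u)).const_mul (k2/2) |>.congr_deriv (by ring))
    exact this.hasDerivWithinAt.congr_deriv (by ring)
  have hbd : ∀ u ∈ Set.Icc (-m) m, ‖k2 * u - deriv k u‖ ≤ ε * m := by
    intro u hu
    have huabs : |u| ≤ m := abs_le.2 ⟨hu.1, hu.2⟩
    have := heb u (le_trans huabs hmδ)
    rw [Real.norm_eq_abs]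
    calc |k2 * u - deriv k u| ≤ ε * |u| := this
      _ ≤ ε * m := mul_le_mul_of_nonneg_left huabs hε.le
  have hxm : x ∈ Set.Icc (-m) m := Set.mem_Icc.2 (abs_le.1 (le_max_left _ _))
  have hym : y ∈ Set.Icc (-m) m := Set.mem_Icc.2 (abs_le.1 (le_max_right _ _))
  have := hconv.norm_image_sub_le_of_norm_hasDerivWithin_le hder hbd hym hxm
  rw [Real.norm_eq_abs, Real.norm_eq_abs] at this
  calc |Efun k x - Efun k y| ≤ ε * m * |x - y| := this
    _ = ε * (m * |x - y|) := by ring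
    _ ≤ ε * ((|x| + |y|) * |x - y|) := by
        have hmle : m ≤ |x| + |y| := max_le (by linarith [abs_nonneg y]) (by linarith [abs_nonneg x])
        exact mul_le_mul_of_nonneg_left
          (mul_le_mul_of_nonneg_right hmle (abs_nonneg _)) hε.le

noncomputable def Acoef (k : ℝ → ℝ) : ℝ := -(deriv (deriv k) 0) / 2

lemma gram2 {q : ℕ} {V : Type*} [NormedAddCommGroup V] [InnerProductSpace ℝ V]
    (k : ℝ → ℝ) (Kfeat : EuclideanSpace ℝ (Fin q) → EuclideanSpace ℝ (Fin q) → V)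
    (hker : ∀ (z z' α β : EuclideanSpace ℝ (Fin q)),
      ⟪Kfeat z α, Kfeat z' β⟫ = k ‖z - z'‖ * ⟪α, β⟫)
    (z h h' α β : EuclideanSpace ℝ (Fin q)) :
    ⟪Kfeat (z + h) α - Kfeat z α, Kfeat (z + h') β - Kfeat z β⟫ =
      (2 * Acoef k * ⟪h, h'⟫ + (Efun k ‖h‖ + Efun k ‖h'‖ - Efun k ‖h - h'‖)) * ⟪α, β⟫ := by
  have e1 : z + h - (z + h') = h - h' := by abel
  have e2 : z + h - z = h := by abel
  have e3 : z - (z + h') = -h' := by abel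
  have e4 : z - z = (0 : EuclideanSpace ℝ (Fin q)) := by abel
  rw [inner_sub_left, inner_sub_right, inner_sub_right, hker, hker, hker, hker,
    e1, e2, e3, e4, norm_neg, norm_zero]
  have hip : ⟪h, h'⟫ = (‖h‖ ^ 2 + ‖h'‖ ^ 2 - ‖h - h'‖ ^ 2) / 2 := by
    have := norm_sub_sq_real h h'
    linarith
  rw [hip]
  unfold Efun Acoef
  ring
lemma L3a (k : ℝ → ℝ) (hk : ContDiffAt ℝ 2 k 0) (hk' : deriv k 0 = 0) (c : ℝ) (hc : 0 ≤ c) :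
    Tendsto (fun n : ℕ => (n : ℝ) ^ 2 * Efun k ((n : ℝ)⁻¹ * c)) atTop (𝓝 0) := by
  rw [Metric.tendsto_atTop]
  intro ε' hε'
  obtain ⟨δ, hδ, hE⟩ := Eest k hk hk' (ε' / (c ^ 2 + 1)) (by positivity)
  obtain ⟨N₀, hN₀⟩ := exists_nat_gt (c / δ)
  refine ⟨N₀ + 1, fun n hn => ?_⟩
  have hn1 : (1 : ℝ) ≤ (n : ℝ) := by exact_mod_cast Nat.one_le_iff_ne_zero.2 (by omega)
  have hnpos : (0 : ℝ) < n := by linarith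
  have hcn : (n : ℝ)⁻¹ * c ≤ δ := by
    rw [inv_mul_le_iff₀ hnpos]
    have : c / δ ≤ (n : ℝ) := by
      calc c / δ ≤ N₀ := hN₀.le
        _ ≤ (n : ℝ) := by exact_mod_cast (by omega : N₀ ≤ n)
    calc c = c / δ * δ := by field_simp
      _ ≤ (n : ℝ) * δ := mul_le_mul_of_nonneg_right this hδ.le
  have habs : |(n : ℝ)⁻¹ * c| ≤ δ := by
    rw [abs_of_nonneg (by positivity)]; exact hcn
  have := hE ((n : ℝ)⁻¹ * c) 0 habs (by simpa using hδ.le)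
  rw [Efun_zero, sub_zero, sub_zero, abs_zero, add_zero,
    abs_of_nonneg (show (0:ℝ) ≤ (n : ℝ)⁻¹ * c by positivity)] at this
  rw [Real.dist_eq, sub_zero, abs_mul, abs_of_nonneg (by positivity : (0:ℝ) ≤ (n:ℝ)^2)]
  calc (n : ℝ) ^ 2 * |Efun k ((n : ℝ)⁻¹ * c)|
      ≤ (n : ℝ) ^ 2 * (ε' / (c ^ 2 + 1) * ((n : ℝ)⁻¹ * c * ((n : ℝ)⁻¹ * c))) :=
        mul_le_mul_of_nonneg_left this (by positivity)
    _ = ε' / (c ^ 2 + 1) * c ^ 2 := by field_simp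
    _ < ε' := by
        rw [div_mul_eq_mul_div, div_lt_iff₀ (by positivity)]
        nlinarith

lemma tendsto_gram {q : ℕ} {V : Type*} [NormedAddCommGroup V] [InnerProductSpace ℝ V]
    (k : ℝ → ℝ) (hk : ContDiffAt ℝ 2 k 0) (hk' : deriv k 0 = 0)
    (Kfeat : EuclideanSpace ℝ (Fin q) → EuclideanSpace ℝ (Fin q) → V)
    (hker : ∀ (z z' α β : EuclideanSpace ℝ (Fin q)),
      ⟪Kfeat z α, Kfeat z' β⟫ = k ‖z - z'‖ * ⟪α, β⟫)
    (z u u' α β : EuclideanSpace ℝ (Fin q)) :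
    Tendsto (fun n : ℕ =>
        ⟪(n : ℝ) • (Kfeat (z + (n : ℝ)⁻¹ • u) α - Kfeat z α),
         (n : ℝ) • (Kfeat (z + (n : ℝ)⁻¹ • u') β - Kfeat z β)⟫)
      atTop (𝓝 (2 * Acoef k * ⟪u, u'⟫ * ⟪α, β⟫)) := by
  have hmain : Tendsto (fun n : ℕ =>
      (2 * Acoef k * ⟪u, u'⟫ + ((n : ℝ) ^ 2 * Efun k ((n : ℝ)⁻¹ * ‖u‖)
        + (n : ℝ) ^ 2 * Efun k ((n : ℝ)⁻¹ * ‖u'‖)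
        - (n : ℝ) ^ 2 * Efun k ((n : ℝ)⁻¹ * ‖u - u'‖))) * ⟪α, β⟫)
      atTop (𝓝 ((2 * Acoef k * ⟪u, u'⟫ + (0 + 0 - 0)) * ⟪α, β⟫)) := by
    exact (Tendsto.mul ((tendsto_const_nhds.add
      (((L3a k hk hk' ‖u‖ (norm_nonneg _)).add (L3a k hk hk' ‖u'‖ (norm_nonneg _))).sub
        (L3a k hk hk' ‖u - u'‖ (norm_nonneg _))))) tendsto_const_nhds)
  have heq : ∀ᶠ n : ℕ in atTop, (2 * Acoef k * ⟪u, u'⟫ + ((n : ℝ) ^ 2 * Efun k ((n : ℝ)⁻¹ * ‖u‖)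
        + (n : ℝ) ^ 2 * Efun k ((n : ℝ)⁻¹ * ‖u'‖)
        - (n : ℝ) ^ 2 * Efun k ((n : ℝ)⁻¹ * ‖u - u'‖))) * ⟪α, β⟫ =
      ⟪(n : ℝ) • (Kfeat (z + (n : ℝ)⁻¹ • u) α - Kfeat z α),
       (n : ℝ) • (Kfeat (z + (n : ℝ)⁻¹ • u') β - Kfeat z β)⟫ := by
    filter_upwards [eventually_ge_atTop 1] with n hn
    have hnpos : (0 : ℝ) < n := by exact_mod_cast Nat.lt_of_lt_of_le Nat.zero_lt_one hn
    have hinv : (0 : ℝ) ≤ (n : ℝ)⁻¹ := by positivity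
    rw [real_inner_smul_left, real_inner_smul_right, gram2 k Kfeat hker]
    rw [norm_smul, norm_smul, show (n:ℝ)⁻¹ • u - (n:ℝ)⁻¹ • u' = (n:ℝ)⁻¹ • (u - u') from
      (smul_sub _ _ _).symm, norm_smul, real_inner_smul_left, real_inner_smul_right]
    rw [Real.norm_eq_abs, abs_of_nonneg hinv]
    field_simp
  have := hmain.congr' heq
  convert this using 2
  ring

lemma L4core (k : ℝ → ℝ) (ε δ : ℝ) (hε : 0 < ε) (hδ : 0 < δ)
    (hE : ∀ x y : ℝ, |x| ≤ δ → |y| ≤ δ → |Efun k x - Efun k y| ≤ ε * ((|x| + |y|) * |x - y|))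
    (N M r : ℝ) (h1 : 1 ≤ N) (hNM : N ≤ M) (hr : 0 ≤ r) (hrδ : r ≤ N * δ) :
    |2 * N ^ 2 * Efun k (N⁻¹ * r) + 2 * M ^ 2 * Efun k (M⁻¹ * r)
      - 2 * (N * M) * (Efun k (N⁻¹ * r) + Efun k (M⁻¹ * r) - Efun k ((N⁻¹ - M⁻¹) * r))|
      ≤ 10 * ε * r ^ 2 := by
  have hN : (0:ℝ) < N := by linarith
  have hM : (0:ℝ) < M := by linarith
  set x := N⁻¹ * r with hx
  set y := M⁻¹ * r with hy
  have hx0 : 0 ≤ x := by positivity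
  have hy0 : 0 ≤ y := by positivity
  have hyx : y ≤ x := by
    apply mul_le_mul_of_nonneg_right _ hr
    exact inv_anti₀ hN hNM
  have hxδ : x ≤ δ := by
    rw [hx, inv_mul_le_iff₀ hN]; exact hrδ
  have hyδ : y ≤ δ := le_trans hyx hxδ
  have hNx : N * x = r := by rw [hx]; field_simp
  have hMy : M * y = r := by rw [hy]; field_simp
  have hxy : (N⁻¹ - M⁻¹) * r = x - y := by rw [hx, hy]; ring
  have hEx := hE x 0 (by rwa [abs_of_nonneg hx0]) (by rw [abs_zero]; exact hδ.le)
  have hEy := hE y 0 (by rwa [abs_of_nonneg hy0]) (by rw [abs_zero]; exact hδ.le)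
  rw [Efun_zero, sub_zero, sub_zero, abs_zero, add_zero] at hEx hEy
  rw [abs_of_nonneg hx0] at hEx
  rw [abs_of_nonneg hy0] at hEy
  have hExy := hE x (x - y) (by rwa [abs_of_nonneg hx0])
    (by rw [abs_of_nonneg (by linarith)]; linarith)
  rw [abs_of_nonneg hx0, abs_of_nonneg (by linarith : (0:ℝ) ≤ x - y),
    show x - (x - y) = y by ring, abs_of_nonneg hy0] at hExy
  -- four bounds
  have b1 : |2 * N ^ 2 * Efun k x| ≤ 2 * ε * r ^ 2 := by
    rw [abs_mul, abs_of_nonneg (by positivity : (0:ℝ) ≤ 2 * N ^ 2)]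
    calc 2 * N ^ 2 * |Efun k x| ≤ 2 * N ^ 2 * (ε * (x * x)) :=
          mul_le_mul_of_nonneg_left hEx (by positivity)
      _ = 2 * ε * (N * x) ^ 2 := by ring
      _ = 2 * ε * r ^ 2 := by rw [hNx]
  have b2 : |2 * M ^ 2 * Efun k y| ≤ 2 * ε * r ^ 2 := by
    rw [abs_mul, abs_of_nonneg (by positivity : (0:ℝ) ≤ 2 * M ^ 2)]
    calc 2 * M ^ 2 * |Efun k y| ≤ 2 * M ^ 2 * (ε * (y * y)) :=
          mul_le_mul_of_nonneg_left hEy (by positivity)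
      _ = 2 * ε * (M * y) ^ 2 := by ring
      _ = 2 * ε * r ^ 2 := by rw [hMy]
  have b3 : |2 * (N * M) * Efun k y| ≤ 2 * ε * r ^ 2 := by
    rw [abs_mul, abs_of_nonneg (by positivity : (0:ℝ) ≤ 2 * (N * M))]
    calc 2 * (N * M) * |Efun k y| ≤ 2 * (N * M) * (ε * (y * y)) :=
          mul_le_mul_of_nonneg_left hEy (by positivity)
      _ = 2 * ε * (N / M) * (M * y) ^ 2 := by field_simp
      _ = 2 * ε * (N / M) * r ^ 2 := by rw [hMy]
      _ ≤ 2 * ε * 1 * r ^ 2 := by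
          apply mul_le_mul_of_nonneg_right _ (by positivity)
          apply mul_le_mul_of_nonneg_left _ (by positivity)
          rw [div_le_one hM]; exact hNM
      _ = 2 * ε * r ^ 2 := by ring
  have b4 : |2 * (N * M) * (Efun k x - Efun k (x - y))| ≤ 4 * ε * r ^ 2 := by
    rw [abs_mul, abs_of_nonneg (by positivity : (0:ℝ) ≤ 2 * (N * M))]
    calc 2 * (N * M) * |Efun k x - Efun k (x - y)| ≤ 2 * (N * M) * (ε * ((x + (x - y)) * y)) :=
          mul_le_mul_of_nonneg_left hExy (by positivity)
      _ ≤ 2 * (N * M) * (ε * (2 * x * y)) := by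
          apply mul_le_mul_of_nonneg_left _ (by positivity)
          apply mul_le_mul_of_nonneg_left _ hε.le
          apply mul_le_mul_of_nonneg_right _ hy0
          linarith
      _ = 4 * ε * (N * x) * (M * y) := by ring
      _ = 4 * ε * r ^ 2 := by rw [hNx, hMy]; ring
  have hsplit : 2 * N ^ 2 * Efun k x + 2 * M ^ 2 * Efun k y
      - 2 * (N * M) * (Efun k x + Efun k y - Efun k (x - y))
      = (2 * N ^ 2 * Efun k x) + (2 * M ^ 2 * Efun k y) - (2 * (N * M) * Efun k y)
        - (2 * (N * M) * (Efun k x - Efun k (x - y))) := by ring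
  rw [hxy, hsplit]
  have t1 := abs_le.1 b1
  have t2 := abs_le.1 b2
  have t3 := abs_le.1 b3
  have t4 := abs_le.1 b4
  rw [abs_le]
  constructor <;> linarith

lemma L4vec {q : ℕ} {V : Type*} [NormedAddCommGroup V] [InnerProductSpace ℝ V]
    (k : ℝ → ℝ) (Kfeat : EuclideanSpace ℝ (Fin q) → EuclideanSpace ℝ (Fin q) → V)
    (hker : ∀ (z z' α β : EuclideanSpace ℝ (Fin q)),
      ⟪Kfeat z α, Kfeat z' β⟫ = k ‖z - z'‖ * ⟪α, β⟫)
    (ε δ : ℝ) (hε : 0 < ε) (hδ : 0 < δ)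
    (hE : ∀ x y : ℝ, |x| ≤ δ → |y| ≤ δ → |Efun k x - Efun k y| ≤ ε * ((|x| + |y|) * |x - y|))
    (z h α : EuclideanSpace ℝ (Fin q)) (n m : ℕ) (h1 : 1 ≤ n) (hnm : n ≤ m)
    (hrδ : ‖h‖ ≤ (n : ℝ) * δ) :
    ‖(n : ℝ) • (Kfeat (z + (n : ℝ)⁻¹ • h) α - Kfeat z α)
      - (m : ℝ) • (Kfeat (z + (m : ℝ)⁻¹ • h) α - Kfeat z α)‖ ^ 2
      ≤ 10 * ε * ‖h‖ ^ 2 * ‖α‖ ^ 2 := by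
  set N : ℝ := (n : ℝ) with hNdef
  set M : ℝ := (m : ℝ) with hMdef
  have hN1 : (1:ℝ) ≤ N := by rw [hNdef]; exact_mod_cast h1
  have hNM : N ≤ M := by rw [hNdef, hMdef]; exact_mod_cast hnm
  have hNpos : (0:ℝ) < N := by linarith
  have hMpos : (0:ℝ) < M := by linarith
  have hNne : N ≠ 0 := ne_of_gt hNpos
  have hMne : M ≠ 0 := ne_of_gt hMpos
  have hinvle : M⁻¹ ≤ N⁻¹ := inv_anti₀ hNpos hNM
  set r : ℝ := ‖h‖ with hrdef
  have hr0 : 0 ≤ r := norm_nonneg _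
  have hnormN : ‖N⁻¹ • h‖ = N⁻¹ * r := by
    rw [norm_smul, Real.norm_eq_abs, abs_of_nonneg (by positivity)]
  have hnormM : ‖M⁻¹ • h‖ = M⁻¹ * r := by
    rw [norm_smul, Real.norm_eq_abs, abs_of_nonneg (by positivity)]
  have hnormNM : ‖N⁻¹ • h - M⁻¹ • h‖ = (N⁻¹ - M⁻¹) * r := by
    rw [show N⁻¹ • h - M⁻¹ • h = (N⁻¹ - M⁻¹) • h from (sub_smul _ _ _).symm,
      norm_smul, Real.norm_eq_abs, abs_of_nonneg (by linarith)]
  have hip : ⟪h, h⟫ = r ^ 2 := real_inner_self_eq_norm_sq h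
  have e_nn : ⟪N • (Kfeat (z + N⁻¹ • h) α - Kfeat z α), N • (Kfeat (z + N⁻¹ • h) α - Kfeat z α)⟫
      = (2 * Acoef k * r ^ 2 + 2 * N ^ 2 * Efun k (N⁻¹ * r)) * ⟪α, α⟫ := by
    rw [real_inner_smul_left, real_inner_smul_right, gram2 k Kfeat hker,
      real_inner_smul_left, real_inner_smul_right, hip, hnormN, sub_self, norm_zero, Efun_zero]
    field_simp
    ring
  have e_mm : ⟪M • (Kfeat (z + M⁻¹ • h) α - Kfeat z α), M • (Kfeat (z + M⁻¹ • h) α - Kfeat z α)⟫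
      = (2 * Acoef k * r ^ 2 + 2 * M ^ 2 * Efun k (M⁻¹ * r)) * ⟪α, α⟫ := by
    rw [real_inner_smul_left, real_inner_smul_right, gram2 k Kfeat hker,
      real_inner_smul_left, real_inner_smul_right, hip, hnormM, sub_self, norm_zero, Efun_zero]
    field_simp
    ring
  have e_nm : ⟪N • (Kfeat (z + N⁻¹ • h) α - Kfeat z α), M • (Kfeat (z + M⁻¹ • h) α - Kfeat z α)⟫
      = (2 * Acoef k * r ^ 2 + N * M * (Efun k (N⁻¹ * r) + Efun k (M⁻¹ * r)
          - Efun k ((N⁻¹ - M⁻¹) * r))) * ⟪α, α⟫ := by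
    rw [real_inner_smul_left, real_inner_smul_right, gram2 k Kfeat hker,
      real_inner_smul_left, real_inner_smul_right, hip, hnormN, hnormM, hnormNM]
    field_simp
  rw [norm_sub_sq_real, ← real_inner_self_eq_norm_sq, ← real_inner_self_eq_norm_sq,
    e_nn, e_mm, e_nm]
  have hfin : (2 * Acoef k * r ^ 2 + 2 * N ^ 2 * Efun k (N⁻¹ * r)) * ⟪α, α⟫
      - 2 * ((2 * Acoef k * r ^ 2 + N * M * (Efun k (N⁻¹ * r) + Efun k (M⁻¹ * r)
          - Efun k ((N⁻¹ - M⁻¹) * r))) * ⟪α, α⟫)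
      + (2 * Acoef k * r ^ 2 + 2 * M ^ 2 * Efun k (M⁻¹ * r)) * ⟪α, α⟫
      = (2 * N ^ 2 * Efun k (N⁻¹ * r) + 2 * M ^ 2 * Efun k (M⁻¹ * r)
        - 2 * (N * M) * (Efun k (N⁻¹ * r) + Efun k (M⁻¹ * r) - Efun k ((N⁻¹ - M⁻¹) * r)))
          * ⟪α, α⟫ := by ring
  rw [hfin]
  have hcore := L4core k ε δ hε hδ hE N M r hN1 hNM hr0 hrδ
  calc (2 * N ^ 2 * Efun k (N⁻¹ * r) + 2 * M ^ 2 * Efun k (M⁻¹ * r)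
        - 2 * (N * M) * (Efun k (N⁻¹ * r) + Efun k (M⁻¹ * r) - Efun k ((N⁻¹ - M⁻¹) * r)))
          * ⟪α, α⟫
      ≤ |2 * N ^ 2 * Efun k (N⁻¹ * r) + 2 * M ^ 2 * Efun k (M⁻¹ * r)
        - 2 * (N * M) * (Efun k (N⁻¹ * r) + Efun k (M⁻¹ * r) - Efun k ((N⁻¹ - M⁻¹) * r))|
          * ⟪α, α⟫ := mul_le_mul_of_nonneg_right (le_abs_self _) real_inner_self_nonneg
    _ ≤ (10 * ε * r ^ 2) * ⟪α, α⟫ := mul_le_mul_of_nonneg_right hcore real_inner_self_nonneg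
    _ = 10 * ε * ‖h‖ ^ 2 * ‖α‖ ^ 2 := by rw [real_inner_self_eq_norm_sq, hrdef]

set_option maxHeartbeats 2000000 in
lemma exL {q : ℕ} {V : Type*} [NormedAddCommGroup V] [InnerProductSpace ℝ V]
    (k : ℝ → ℝ) (hk : ContDiffAt ℝ 2 k 0) (hk' : deriv k 0 = 0)
    (ev : V → EuclideanSpace ℝ (Fin q) → EuclideanSpace ℝ (Fin q))
    (Kfeat : EuclideanSpace ℝ (Fin q) → EuclideanSpace ℝ (Fin q) → V)
    (hrep : ∀ (v : V) (z α : EuclideanSpace ℝ (Fin q)), ⟪ev v z, α⟫ = ⟪v, Kfeat z α⟫)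
    (hker : ∀ (z z' α β : EuclideanSpace ℝ (Fin q)),
      ⟪Kfeat z α, Kfeat z' β⟫ = k ‖z - z'‖ * ⟪α, β⟫)
    (hA : 0 ≤ -(deriv (deriv k) 0))
    (e : EuclideanSpace ℝ (Fin q)) (he : ⟪e, e⟫ = (1:ℝ))
    (v : V) (z : EuclideanSpace ℝ (Fin q)) :
    ∃ L : EuclideanSpace ℝ (Fin q) →L[ℝ] EuclideanSpace ℝ (Fin q),
      HasFDerivAt (ev v) L z ∧ ‖L‖ ≤ Real.sqrt (-(deriv (deriv k) 0)) * ‖v‖ := by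
  classical
  set f := ev v with hf
  set X : EuclideanSpace ℝ (Fin q) → EuclideanSpace ℝ (Fin q) → ℕ → V :=
    fun u α n => (n : ℝ) • (Kfeat (z + (n : ℝ)⁻¹ • u) α - Kfeat z α) with hX
  set g : EuclideanSpace ℝ (Fin q) → ℕ → EuclideanSpace ℝ (Fin q) :=
    fun u n => (n : ℝ) • (f (z + (n : ℝ)⁻¹ • u) - f z) with hg
  have hpair : ∀ u α n, ⟪g u n, α⟫ = ⟪v, X u α n⟫ := by
    intro u α n
    rw [hg, hX]
    simp only [real_inner_smul_left, real_inner_smul_right, inner_sub_left, inner_sub_right,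
      hf, hrep]
  have hbound : ∀ (w : EuclideanSpace ℝ (Fin q)) (Yw : V) (C : ℝ), 0 ≤ C →
      ⟪w, w⟫ = ⟪v, Yw⟫ → ‖Yw‖ ≤ C * ‖w‖ → ‖w‖ ≤ ‖v‖ * C := by
    intro w Yw C hC hip hYb
    rcases eq_or_lt_of_le (norm_nonneg w) with h0 | h0
    · rw [← h0]; positivity
    · have h1 : ‖w‖ ^ 2 ≤ ‖v‖ * (C * ‖w‖) := by
        calc ‖w‖ ^ 2 = ⟪w, w⟫ := (real_inner_self_eq_norm_sq w).symm
          _ = ⟪v, Yw⟫ := hip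
          _ ≤ ‖v‖ * ‖Yw‖ := real_inner_le_norm v Yw
          _ ≤ ‖v‖ * (C * ‖w‖) := mul_le_mul_of_nonneg_left hYb (norm_nonneg v)
      nlinarith
  -- quantitative Cauchy-type bound
  have hkey : ∀ (ε δ : ℝ), 0 < ε → 0 < δ →
      (∀ x y : ℝ, |x| ≤ δ → |y| ≤ δ → |Efun k x - Efun k y| ≤ ε * ((|x| + |y|) * |x - y|)) →
      ∀ (u α : EuclideanSpace ℝ (Fin q)) (n m : ℕ), 1 ≤ n → n ≤ m → ‖u‖ ≤ (n : ℝ) * δ →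
      ‖X u α n - X u α m‖ ≤ Real.sqrt (10 * ε) * ‖u‖ * ‖α‖ := by
    intro ε δ hε hδ hEp u α n m h1 hnm hrδ
    have h2 := L4vec k Kfeat hker ε δ hε hδ hEp z u α n m h1 hnm hrδ
    have h3 : ‖X u α n - X u α m‖ = Real.sqrt (‖X u α n - X u α m‖ ^ 2) :=
      (Real.sqrt_sq (norm_nonneg _)).symm
    rw [h3]
    calc Real.sqrt (‖X u α n - X u α m‖ ^ 2) ≤ Real.sqrt (10 * ε * ‖u‖ ^ 2 * ‖α‖ ^ 2) :=
          Real.sqrt_le_sqrt h2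
      _ = Real.sqrt (10 * ε) * ‖u‖ * ‖α‖ := by
          rw [show 10 * ε * ‖u‖ ^ 2 * ‖α‖ ^ 2 = (10 * ε) * (‖u‖ * ‖α‖) ^ 2 by ring,
            Real.sqrt_mul (by positivity), Real.sqrt_sq (by positivity)]
          ring
  have hgd : ∀ (ε δ : ℝ), 0 < ε → 0 < δ →
      (∀ x y : ℝ, |x| ≤ δ → |y| ≤ δ → |Efun k x - Efun k y| ≤ ε * ((|x| + |y|) * |x - y|)) →
      ∀ (u : EuclideanSpace ℝ (Fin q)) (n m : ℕ), 1 ≤ n → n ≤ m → ‖u‖ ≤ (n : ℝ) * δ →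
      ‖g u n - g u m‖ ≤ ‖v‖ * (Real.sqrt (10 * ε) * ‖u‖) := by
    intro ε δ hε hδ hEp u n m h1 hnm hrδ
    refine hbound _ (X u (g u n - g u m) n - X u (g u n - g u m) m) _ (by positivity) ?_ ?_
    · rw [inner_sub_left, hpair, hpair, inner_sub_right]
    · have := hkey ε δ hε hδ hEp u (g u n - g u m) n m h1 hnm hrδ
      calc ‖X u (g u n - g u m) n - X u (g u n - g u m) m‖
          ≤ Real.sqrt (10 * ε) * ‖u‖ * ‖g u n - g u m‖ := this
        _ = Real.sqrt (10 * ε) * ‖u‖ * ‖g u n - g u m‖ := rfl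
  have hcauchy : ∀ u, CauchySeq (g u) := by
    intro u
    rw [Metric.cauchySeq_iff']
    intro ε' hε'
    set c : ℝ := ε' / 2 / (‖v‖ * ‖u‖ + 1) with hc
    have hcpos : 0 < c := by positivity
    set ε : ℝ := c ^ 2 / 10 with hεdef
    have hεpos : 0 < ε := by positivity
    obtain ⟨δ, hδ, hEp⟩ := Eest k hk hk' ε hεpos
    obtain ⟨N₀, hN₀⟩ := exists_nat_gt (‖u‖ / δ)
    refine ⟨N₀ + 1, fun n hn => ?_⟩
    have h1 : 1 ≤ N₀ + 1 := by omega
    have hNδ : ‖u‖ ≤ ((N₀ + 1 : ℕ) : ℝ) * δ := by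
      have : ‖u‖ / δ ≤ ((N₀ + 1 : ℕ) : ℝ) := by
        push_cast
        linarith [hN₀]
      calc ‖u‖ = ‖u‖ / δ * δ := by field_simp
        _ ≤ ((N₀ + 1 : ℕ) : ℝ) * δ := mul_le_mul_of_nonneg_right this hδ.le
    have hsq : Real.sqrt (10 * ε) = c := by
      rw [hεdef, show 10 * (c ^ 2 / 10) = c ^ 2 by ring, Real.sqrt_sq hcpos.le]
    have := hgd ε δ hεpos hδ hEp u (N₀ + 1) n h1 hn hNδ
    rw [hsq] at this
    rw [dist_eq_norm, norm_sub_rev]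
    calc ‖g u (N₀ + 1) - g u n‖ ≤ ‖v‖ * (c * ‖u‖) := this
      _ < ε' := by
          rw [hc]
          have h2 : ‖v‖ * (ε' / 2 / (‖v‖ * ‖u‖ + 1) * ‖u‖)
              = (‖v‖ * ‖u‖) * (ε' / 2) / (‖v‖ * ‖u‖ + 1) := by ring
          rw [h2, div_lt_iff₀ (by positivity : (0:ℝ) < ‖v‖ * ‖u‖ + 1)]
          nlinarith [mul_nonneg (norm_nonneg v) (norm_nonneg u)]
  have hLv0 := fun u => cauchySeq_tendsto_of_complete (hcauchy u)
  choose Lv hLv using hLv0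
  have hBL : ∀ u α, Tendsto (fun n => ⟪g u n, α⟫) atTop (𝓝 ⟪Lv u, α⟫) :=
    fun u α => (hLv u).inner tendsto_const_nhds
  have hXlim : ∀ u u' α β, Tendsto (fun n => ⟪X u α n, X u' β n⟫) atTop
      (𝓝 (2 * Acoef k * ⟪u, u'⟫ * ⟪α, β⟫)) := by
    intro u u' α β
    exact tendsto_gram k hk hk' Kfeat hker z u u' α β
  -- scalar Gram coefficient
  set cf : EuclideanSpace ℝ (Fin q) → EuclideanSpace ℝ (Fin q) → ℕ → ℝ :=
    fun u u' n => (n : ℝ) * ((n : ℝ) * (2 * Acoef k * ⟪(n : ℝ)⁻¹ • u, (n : ℝ)⁻¹ • u'⟫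
      + (Efun k ‖(n : ℝ)⁻¹ • u‖ + Efun k ‖(n : ℝ)⁻¹ • u'‖
        - Efun k ‖(n : ℝ)⁻¹ • u - (n : ℝ)⁻¹ • u'‖))) with hcf
  have hc : ∀ u u' α β n, ⟪X u α n, X u' β n⟫ = cf u u' n * ⟪α, β⟫ := by
    intro u u' α β n
    rw [hX, hcf]
    simp only []
    rw [real_inner_smul_left, real_inner_smul_right, gram2 k Kfeat hker]
    ring
  have hclim : ∀ u u', Tendsto (cf u u') atTop (𝓝 (2 * Acoef k * ⟪u, u'⟫)) := by
    intro u u'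
    have h2 := (hXlim u u' e e).congr (fun n => by rw [hc u u' e e n, he, mul_one])
    rwa [he, mul_one] at h2
  have hcnonneg : ∀ u n, 0 ≤ cf u u n := by
    intro u n
    have := hc u u e e n
    rw [he, mul_one] at this
    rw [← this]
    exact real_inner_self_nonneg
  -- additivity
  have hadd : ∀ u u', Lv (u + u') = Lv u + Lv u' := by
    intro u u'
    set w : ℕ → EuclideanSpace ℝ (Fin q) := fun n => g (u + u') n - g u n - g u' n with hw
    set S : ℕ → ℝ := fun n => cf (u + u') (u + u') n - cf (u + u') u n - cf (u + u') u' n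
      - cf u (u + u') n + cf u u n + cf u u' n - cf u' (u + u') n + cf u' u n + cf u' u' n with hS
    have hYsq : ∀ n (α : EuclideanSpace ℝ (Fin q)),
        ⟪X (u + u') α n - X u α n - X u' α n, X (u + u') α n - X u α n - X u' α n⟫
          = S n * ⟪α, α⟫ := by
      intro n α
      simp only [inner_sub_left, inner_sub_right, hc, hS]
      ring
    have hSnonneg : ∀ n, 0 ≤ S n := by
      intro n
      have := hYsq n e
      rw [he, mul_one] at this
      rw [← this]
      exact real_inner_self_nonneg
    have hSlim : Tendsto S atTop (𝓝 0) := by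
      have h9 := ((((((((hclim (u+u') (u+u')).sub (hclim (u+u') u)).sub
        (hclim (u+u') u')).sub (hclim u (u+u'))).add (hclim u u)).add (hclim u u')).sub
        (hclim u' (u+u'))).add (hclim u' u)).add (hclim u' u')
      have hz9 : 2 * Acoef k * ⟪u + u', u + u'⟫ - 2 * Acoef k * ⟪u + u', u⟫
          - 2 * Acoef k * ⟪u + u', u'⟫ - 2 * Acoef k * ⟪u, u + u'⟫ + 2 * Acoef k * ⟪u, u⟫
          + 2 * Acoef k * ⟪u, u'⟫ - 2 * Acoef k * ⟪u', u + u'⟫ + 2 * Acoef k * ⟪u', u⟫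
          + 2 * Acoef k * ⟪u', u'⟫ = 0 := by
        simp only [inner_add_left, inner_add_right]
        ring
      rw [hz9] at h9
      exact h9
    have hwb : ∀ n, ‖w n‖ ≤ ‖v‖ * Real.sqrt (S n) := by
      intro n
      refine hbound (w n) (X (u + u') (w n) n - X u (w n) n - X u' (w n) n) _
        (Real.sqrt_nonneg _) ?_ ?_
      · calc ⟪w n, w n⟫ = ⟪g (u + u') n, w n⟫ - ⟪g u n, w n⟫ - ⟪g u' n, w n⟫ := by
              conv_lhs => rw [hw]
              simp only [inner_sub_left]
              rfl
          _ = ⟪v, X (u + u') (w n) n⟫ - ⟪v, X u (w n) n⟫ - ⟪v, X u' (w n) n⟫ := by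
              rw [hpair, hpair, hpair]
          _ = ⟪v, X (u + u') (w n) n - X u (w n) n - X u' (w n) n⟫ := by
              rw [inner_sub_right, inner_sub_right]
      · have h1 : ‖X (u + u') (w n) n - X u (w n) n - X u' (w n) n‖
            = Real.sqrt (S n) * ‖w n‖ := by
          rw [show ‖X (u + u') (w n) n - X u (w n) n - X u' (w n) n‖
              = Real.sqrt (⟪X (u + u') (w n) n - X u (w n) n - X u' (w n) n,
                X (u + u') (w n) n - X u (w n) n - X u' (w n) n⟫) by
            rw [real_inner_self_eq_norm_sq, Real.sqrt_sq (norm_nonneg _)]]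
          rw [hYsq, real_inner_self_eq_norm_sq, Real.sqrt_mul (hSnonneg n),
            Real.sqrt_sq (norm_nonneg _)]
        rw [h1]
    have hwlim : Tendsto w atTop (𝓝 0) := by
      rw [tendsto_zero_iff_norm_tendsto_zero]
      refine squeeze_zero (fun n => norm_nonneg _) hwb ?_
      have := (hSlim.sqrt).const_mul ‖v‖
      simpa using this
    have hwlim2 : Tendsto w atTop (𝓝 (Lv (u + u') - Lv u - Lv u')) :=
      ((hLv (u + u')).sub (hLv u)).sub (hLv u')
    have := tendsto_nhds_unique hwlim2 hwlim
    have h2 : Lv (u + u') - (Lv u + Lv u') = 0 := by rw [← this]; abel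
    rw [sub_eq_zero] at h2
    exact h2
  -- homogeneity
  have hsmul : ∀ (a : ℝ) u, Lv (a • u) = a • Lv u := by
    intro a u
    set w : ℕ → EuclideanSpace ℝ (Fin q) := fun n => g (a • u) n - a • g u n with hw
    set S : ℕ → ℝ := fun n => cf (a • u) (a • u) n - a * cf (a • u) u n
      - a * cf u (a • u) n + a * (a * cf u u n) with hS
    have hYsq : ∀ n (α : EuclideanSpace ℝ (Fin q)),
        ⟪X (a • u) α n - a • X u α n, X (a • u) α n - a • X u α n⟫ = S n * ⟪α, α⟫ := by
      intro n α
      simp only [inner_sub_left, inner_sub_right, real_inner_smul_left, real_inner_smul_right,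
        hc, hS]
      ring
    have hSnonneg : ∀ n, 0 ≤ S n := by
      intro n
      have := hYsq n e
      rw [he, mul_one] at this
      rw [← this]
      exact real_inner_self_nonneg
    have hSlim : Tendsto S atTop (𝓝 0) := by
      have h4 := (((hclim (a • u) (a • u)).sub ((hclim (a • u) u).const_mul a)).sub
        ((hclim u (a • u)).const_mul a)).add (((hclim u u).const_mul a).const_mul a)
      have hz4 : 2 * Acoef k * ⟪a • u, a • u⟫ - a * (2 * Acoef k * ⟪a • u, u⟫)
          - a * (2 * Acoef k * ⟪u, a • u⟫) + a * (a * (2 * Acoef k * ⟪u, u⟫)) = 0 := by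
        simp only [real_inner_smul_left, real_inner_smul_right]
        ring
      rw [hz4] at h4
      exact h4.congr (fun n => by rw [hS])
    have hwb : ∀ n, ‖w n‖ ≤ ‖v‖ * Real.sqrt (S n) := by
      intro n
      refine hbound (w n) (X (a • u) (w n) n - a • X u (w n) n) _ (Real.sqrt_nonneg _) ?_ ?_
      · calc ⟪w n, w n⟫ = ⟪g (a • u) n, w n⟫ - a * ⟪g u n, w n⟫ := by
              conv_lhs => rw [hw]
              simp only [inner_sub_left, real_inner_smul_left]
              rfl
          _ = ⟪v, X (a • u) (w n) n⟫ - a * ⟪v, X u (w n) n⟫ := by rw [hpair, hpair]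
          _ = ⟪v, X (a • u) (w n) n - a • X u (w n) n⟫ := by
              rw [← real_inner_smul_right, ← inner_sub_right]
      · have h1 : ‖X (a • u) (w n) n - a • X u (w n) n‖ = Real.sqrt (S n) * ‖w n‖ := by
          rw [show ‖X (a • u) (w n) n - a • X u (w n) n‖
              = Real.sqrt (⟪X (a • u) (w n) n - a • X u (w n) n,
                X (a • u) (w n) n - a • X u (w n) n⟫) by
            rw [real_inner_self_eq_norm_sq, Real.sqrt_sq (norm_nonneg _)]]
          rw [hYsq, real_inner_self_eq_norm_sq, Real.sqrt_mul (hSnonneg n),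
            Real.sqrt_sq (norm_nonneg _)]
        rw [h1]
    have hwlim : Tendsto w atTop (𝓝 0) := by
      rw [tendsto_zero_iff_norm_tendsto_zero]
      refine squeeze_zero (fun n => norm_nonneg _) hwb ?_
      have := (hSlim.sqrt).const_mul ‖v‖
      simpa using this
    have hwlim2 : Tendsto w atTop (𝓝 (Lv (a • u) - a • Lv u)) :=
      (hLv (a • u)).sub ((hLv u).const_smul a)
    have := tendsto_nhds_unique hwlim2 hwlim
    rw [sub_eq_zero] at this
    exact this
  -- the linear map
  have hA2 : 0 ≤ 2 * Acoef k := by rw [Acoef]; linarith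
  set Llin : EuclideanSpace ℝ (Fin q) →ₗ[ℝ] EuclideanSpace ℝ (Fin q) :=
    { toFun := Lv, map_add' := hadd, map_smul' := hsmul } with hLlin
  set L : EuclideanSpace ℝ (Fin q) →L[ℝ] EuclideanSpace ℝ (Fin q) :=
    LinearMap.toContinuousLinearMap Llin with hL
  have hLapp : ∀ u, L u = Lv u := fun u => rfl
  -- operator norm bound
  have hopbd : ∀ u α, |⟪Lv u, α⟫| ≤ ‖v‖ * (Real.sqrt (2 * Acoef k) * ‖u‖ * ‖α‖) := by
    intro u α
    have hx := hXlim u u α α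
    have hnrm : ∀ n, ‖X u α n‖ = Real.sqrt ⟪X u α n, X u α n⟫ := by
      intro n
      rw [real_inner_self_eq_norm_sq, Real.sqrt_sq (norm_nonneg _)]
    have hnormlim : Tendsto (fun n => ‖X u α n‖) atTop
        (𝓝 (Real.sqrt (2 * Acoef k) * ‖u‖ * ‖α‖)) := by
      have h2 := hx.sqrt
      have h3 : Real.sqrt (2 * Acoef k * ⟪u, u⟫ * ⟪α, α⟫)
          = Real.sqrt (2 * Acoef k) * ‖u‖ * ‖α‖ := by
        rw [real_inner_self_eq_norm_sq, real_inner_self_eq_norm_sq,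
          show 2 * Acoef k * ‖u‖ ^ 2 * ‖α‖ ^ 2 = (2 * Acoef k) * (‖u‖ * ‖α‖) ^ 2 by ring,
          Real.sqrt_mul hA2, Real.sqrt_sq (by positivity)]
        ring
      rw [h3] at h2
      exact h2.congr (fun n => (hnrm n).symm)
    have habs : Tendsto (fun n => |⟪g u n, α⟫|) atTop (𝓝 |⟪Lv u, α⟫|) := (hBL u α).abs
    refine le_of_tendsto_of_tendsto' habs (hnormlim.const_mul ‖v‖) (fun n => ?_)
    rw [hpair]
    exact (abs_real_inner_le_norm v _).trans
      (mul_le_mul_of_nonneg_left (le_refl _) (norm_nonneg v))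
  have hLnorm : ∀ u, ‖Lv u‖ ≤ Real.sqrt (2 * Acoef k) * ‖v‖ * ‖u‖ := by
    intro u
    rcases eq_or_lt_of_le (norm_nonneg (Lv u)) with h0 | h0
    · rw [← h0]; positivity
    · have h1 : ‖Lv u‖ ^ 2 ≤ ‖v‖ * (Real.sqrt (2 * Acoef k) * ‖u‖ * ‖Lv u‖) := by
        calc ‖Lv u‖ ^ 2 = ⟪Lv u, Lv u⟫ := (real_inner_self_eq_norm_sq _).symm
          _ ≤ |⟪Lv u, Lv u⟫| := le_abs_self _
          _ ≤ ‖v‖ * (Real.sqrt (2 * Acoef k) * ‖u‖ * ‖Lv u‖) := hopbd u (Lv u)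
      nlinarith
  have hsqrteq : Real.sqrt (2 * Acoef k) = Real.sqrt (-(deriv (deriv k) 0)) := by
    congr 1
    rw [Acoef]; ring
  refine ⟨L, ?_, ?_⟩
  · -- differentiability
    rw [hasFDerivAt_iff_isLittleO_nhds_zero, Asymptotics.isLittleO_iff]
    intro c hc
    set cc : ℝ := c / (‖v‖ + 1) with hcc
    have hccpos : 0 < cc := by positivity
    set ε : ℝ := cc ^ 2 / 10 with hεdef
    have hεpos : 0 < ε := by positivity
    obtain ⟨δ, hδ, hEp⟩ := Eest k hk hk' ε hεpos
    rw [Metric.eventually_nhds_iff]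
    refine ⟨δ, hδ, fun h hdist => ?_⟩
    rw [dist_zero_right] at hdist
    have hg1 : g h 1 = f (z + h) - f z := by
      rw [hg]
      norm_num
    have hδ1 : ‖h‖ ≤ ((1 : ℕ) : ℝ) * δ := by push_cast; linarith
    have hbd1 : ∀ n : ℕ, 1 ≤ n → ‖g h 1 - g h n‖ ≤ ‖v‖ * (Real.sqrt (10 * ε) * ‖h‖) :=
      fun n hn => hgd ε δ hεpos hδ hEp h 1 n (le_refl 1) hn hδ1
    have hlim : Tendsto (fun n => ‖g h 1 - g h n‖) atTop (𝓝 ‖g h 1 - Lv h‖) :=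
      (tendsto_const_nhds.sub (hLv h)).norm
    have hfinal : ‖g h 1 - Lv h‖ ≤ ‖v‖ * (Real.sqrt (10 * ε) * ‖h‖) := by
      refine le_of_tendsto hlim ?_
      filter_upwards [eventually_ge_atTop 1] with n hn
      exact hbd1 n hn
    have hsq : Real.sqrt (10 * ε) = cc := by
      rw [hεdef, show 10 * (cc ^ 2 / 10) = cc ^ 2 by ring, Real.sqrt_sq hccpos.le]
    rw [hsq] at hfinal
    have heq : f (z + h) - f z - L h = g h 1 - Lv h := by
      rw [hg1, hLapp]
    rw [heq]
    calc ‖g h 1 - Lv h‖ ≤ ‖v‖ * (cc * ‖h‖) := hfinal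
      _ ≤ c * ‖h‖ := by
          rw [hcc]
          have h2 : ‖v‖ * (c / (‖v‖ + 1) * ‖h‖) = ‖v‖ * ‖h‖ * c / (‖v‖ + 1) := by ring
          rw [h2, div_le_iff₀ (by positivity : (0:ℝ) < ‖v‖ + 1)]
          nlinarith [norm_nonneg v, norm_nonneg h, mul_nonneg (norm_nonneg v) (norm_nonneg h),
            mul_nonneg (mul_nonneg (norm_nonneg v) (norm_nonneg h)) hc.le]
  · -- norm bound
    refine ContinuousLinearMap.opNorm_le_bound L (by positivity) (fun u => ?_)
    rw [hLapp]
    calc ‖Lv u‖ ≤ Real.sqrt (2 * Acoef k) * ‖v‖ * ‖u‖ := hLnorm u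
      _ = Real.sqrt (-(deriv (deriv k) 0)) * ‖v‖ * ‖u‖ := by rw [hsqrteq]

/-- In a vector-valued RKHS with kernel `K(z,z') = k(‖z−z'‖) Id_q`, where `k` is
twice differentiable at `0` with `k'(0) = 0`, every element `v` is differentiable with
`‖Dv(z)‖₂ ≤ √(−k''(0)) ‖v‖_V`. -/
theorem stmt10 {q : ℕ} {V : Type*} [NormedAddCommGroup V] [InnerProductSpace ℝ V]
    (k : ℝ → ℝ) (hk : ContDiffAt ℝ 2 k 0) (hk' : deriv k 0 = 0)
    (ev : V → EuclideanSpace ℝ (Fin q) → EuclideanSpace ℝ (Fin q))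
    (Kfeat : EuclideanSpace ℝ (Fin q) → EuclideanSpace ℝ (Fin q) → V)
    (hrep : ∀ (v : V) (z α : EuclideanSpace ℝ (Fin q)),
      ⟪ev v z, α⟫ = ⟪v, Kfeat z α⟫)
    (hker : ∀ (z z' α β : EuclideanSpace ℝ (Fin q)),
      ⟪Kfeat z α, Kfeat z' β⟫ = k ‖z - z'‖ * ⟪α, β⟫) :
    ∀ v : V, Differentiable ℝ (ev v) ∧
      ∀ z, ‖fderiv ℝ (ev v) z‖ ≤ Real.sqrt (-(deriv (deriv k) 0)) * ‖v‖ := by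
  intro v
  suffices H : ∀ z, ∃ L : EuclideanSpace ℝ (Fin q) →L[ℝ] EuclideanSpace ℝ (Fin q),
      HasFDerivAt (ev v) L z ∧ ‖L‖ ≤ Real.sqrt (-(deriv (deriv k) 0)) * ‖v‖ by
    constructor
    · exact fun z => ((H z).choose_spec.1).differentiableAt
    · intro z
      rw [((H z).choose_spec.1).fderiv]
      exact (H z).choose_spec.2
  intro z
  rcases Nat.eq_zero_or_pos q with hq | hq
  · subst hq
    refine ⟨0, ?_, ?_⟩
    · have hconst : ev v = fun _ => ev v z := funext fun x => by
        ext i; exact i.elim0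
      rw [hconst]
      exact hasFDerivAt_const _ _
    · rw [norm_zero]
      positivity
  · set e : EuclideanSpace ℝ (Fin q) := EuclideanSpace.single ⟨0, hq⟩ 1 with he0
    have he : ⟪e, e⟫ = (1:ℝ) := by
      rw [real_inner_self_eq_norm_sq, he0, EuclideanSpace.norm_single]
      norm_num
    have hA : 0 ≤ -(deriv (deriv k) 0) := by
      have ht := tendsto_gram k hk hk' Kfeat hker z e e e e
      have h0 : (0:ℝ) ≤ 2 * Acoef k * ⟪e, e⟫ * ⟪e, e⟫ :=
        le_of_tendsto_of_tendsto' tendsto_const_nhds ht (fun n => real_inner_self_nonneg)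
      rw [he, mul_one, mul_one] at h0
      rw [Acoef] at h0
      linarith
    exact exL k hk hk' ev Kfeat hrep hker hA e he v z
end
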